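/- arXiv:solv-int/9907020 — 7 statements merged into one kernel-verified Lean document; each statement's English description precedes it below -/
import Mathlib

section
/- For every integer l ≥ 1, the crystal graph of B_l ⊗ B₁ is connected: for any two elements u, v of B_l × B₁ there is a finite sequence u = w₀, w₁, …, w_N = v in B_l × B₁ such that for each t, w_{t+1} equals ẽ_i w_t or f̃_i w_t for some i ∈ {0,1} (with the tensor product operators). The same statement holds for B₁ × B_l. -/
/-- Membership in the `U_q'(A₂⁽²⁾)` crystal `B_l = {(x,y) : x ≥ 0, y ≥ 0, x+y ≤ l}`. -/
def memB (l : ℤ) (b : ℤ × ℤ) : Prop := 0 ≤ b.1 ∧ 0 ≤ b.2 ∧ b.1 + b.2 ≤ l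

instance (l : ℤ) (b : ℤ × ℤ) : Decidable (memB l b) := by unfold memB; infer_instance

/-- Raw (unconstrained) action of the Kashiwara operator `ẽ_i` (`i = 0` or `i = 1`). -/
def eraw (i : ℕ) (b : ℤ × ℤ) : ℤ × ℤ :=
  if i = 0 then (if b.2 < b.1 then (b.1 - 1, b.2) else (b.1, b.2 + 1))
  else (b.1 + 1, b.2 - 1)

/-- Raw (unconstrained) action of the Kashiwara operator `f̃_i` (`i = 0` or `i = 1`). -/
def fraw (i : ℕ) (b : ℤ × ℤ) : ℤ × ℤ :=
  if i = 0 then (if b.2 ≤ b.1 then (b.1 + 1, b.2) else (b.1, b.2 - 1))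
  else (b.1 - 1, b.2 + 1)

/-- `ẽ_i : B_l → B_l ⊔ {0}`, with `0` modelled by `none`. -/
def eop (l : ℤ) (i : ℕ) (b : ℤ × ℤ) : Option (ℤ × ℤ) :=
  if memB l (eraw i b) then some (eraw i b) else none

/-- `f̃_i : B_l → B_l ⊔ {0}`, with `0` modelled by `none`. -/
def fop (l : ℤ) (i : ℕ) (b : ℤ × ℤ) : Option (ℤ × ℤ) :=
  if memB l (fraw i b) then some (fraw i b) else none

/-- `k`-fold iterate of a partially defined map. -/
def iterOp (f : ℤ × ℤ → Option (ℤ × ℤ)) : ℕ → ℤ × ℤ → Option (ℤ × ℤ)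
  | 0, b => some b
  | k + 1, b => (iterOp f k b).bind f

/-- `ε_i(b) = max {k ≥ 0 : ẽ_iᵏ b ≠ 0}`. -/
noncomputable def eps (l : ℤ) (i : ℕ) (b : ℤ × ℤ) : ℕ :=
  sSup {k : ℕ | iterOp (eop l i) k b ≠ none}

/-- `φ_i(b) = max {k ≥ 0 : f̃_iᵏ b ≠ 0}`. -/
noncomputable def phi (l : ℤ) (i : ℕ) (b : ℤ × ℤ) : ℕ :=
  sSup {k : ℕ | iterOp (fop l i) k b ≠ none}

/-- Kashiwara tensor product rule for `ẽ_i` on `B_{l1} ⊗ B_{l2}`: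
`ẽ_i(b ⊗ b′) = (ẽ_i b) ⊗ b′` if `φ_i(b) ≥ ε_i(b′)`, and `b ⊗ (ẽ_i b′)` otherwise. -/
noncomputable def teop (l1 l2 : ℤ) (i : ℕ) (p : (ℤ × ℤ) × (ℤ × ℤ)) :
    Option ((ℤ × ℤ) × (ℤ × ℤ)) :=
  if eps l2 i p.2 ≤ phi l1 i p.1 then (eop l1 i p.1).map (fun b => (b, p.2))
  else (eop l2 i p.2).map (fun b' => (p.1, b'))

/-- Kashiwara tensor product rule for `f̃_i` on `B_{l1} ⊗ B_{l2}`: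
`f̃_i(b ⊗ b′) = (f̃_i b) ⊗ b′` if `φ_i(b) > ε_i(b′)`, and `b ⊗ (f̃_i b′)` otherwise. -/
noncomputable def tfop (l1 l2 : ℤ) (i : ℕ) (p : (ℤ × ℤ) × (ℤ × ℤ)) :
    Option ((ℤ × ℤ) × (ℤ × ℤ)) :=
  if eps l2 i p.2 < phi l1 i p.1 then (fop l1 i p.1).map (fun b => (b, p.2))
  else (fop l2 i p.2).map (fun b' => (p.1, b'))

lemma memB_mk {l x y : ℤ} (h1 : 0 ≤ x) (h2 : 0 ≤ y) (h3 : x + y ≤ l) : memB l (x, y) :=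
  ⟨h1, h2, h3⟩

/-- Closed form for `ε`. -/
def Efun (l : ℤ) (i : ℕ) (b : ℤ × ℤ) : ℕ :=
  if i = 0 then (if b.2 < b.1 then b.1 + l - 3 * b.2 else l - b.1 - b.2).toNat
  else b.2.toNat

/-- Closed form for `φ`. -/
def Ffun (l : ℤ) (i : ℕ) (b : ℤ × ℤ) : ℕ :=
  if i = 0 then (if b.1 < b.2 then b.2 + l - 3 * b.1 else l - b.1 - b.2).toNat
  else b.1.toNat

lemma iter_succ' (f : ℤ × ℤ → Option (ℤ × ℤ)) (k : ℕ) (b : ℤ × ℤ) :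
    iterOp f (k + 1) b = (f b).bind (iterOp f k) := by
  induction k generalizing b with
  | zero =>
      show (some b).bind f = _
      cases hf : f b <;> simp [iterOp, hf]
  | succ k ih =>
      show (iterOp f (k+1) b).bind f = _
      rw [ih]
      cases hf : f b with
      | none => rfl
      | some b' => show (iterOp f (k+1) b') = _ ; rfl

lemma iter_char (f : ℤ × ℤ → Option (ℤ × ℤ)) (Inv : ℤ × ℤ → Prop) (M : ℤ × ℤ → ℕ)
    (h0 : ∀ b, Inv b → f b = none → M b = 0)
    (h1 : ∀ b b', Inv b → f b = some b' → Inv b' ∧ M b = M b' + 1) :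
    ∀ k b, Inv b → (iterOp f k b ≠ none ↔ k ≤ M b) := by
  intro k
  induction k with
  | zero => intro b _; simp [iterOp]
  | succ k ih =>
      intro b hb
      rw [iter_succ']
      cases hf : f b with
      | none =>
          have h := h0 b hb hf
          simp [h]
      | some b' =>
          obtain ⟨hb', hM⟩ := h1 b b' hb hf
          have := ih b' hb'
          simp only [Option.bind_some]
          rw [this, hM]
          omega


lemma estep_none {l : ℤ} {i : ℕ} {b : ℤ × ℤ} (hb : memB l b) (h : eop l i b = none) :
    Efun l i b = 0 := by
  obtain ⟨x, y⟩ := b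
  obtain ⟨h1, h2, h3⟩ := hb
  unfold eop at h
  by_cases hm : memB l (eraw i (x, y))
  · rw [if_pos hm] at h
    exact absurd h (by simp)
  · unfold memB at hm
    unfold Efun
    unfold eraw at hm
    by_cases hi : i = 0
    · subst hi
      simp only [reduceIte] at hm ⊢
      split_ifs at hm ⊢ <;> omega
    · simp only [hi, if_false] at hm ⊢
      omega

lemma estep_some {l : ℤ} {i : ℕ} {b b' : ℤ × ℤ} (hb : memB l b) (h : eop l i b = some b') :
    memB l b' ∧ Efun l i b = Efun l i b' + 1 := by
  obtain ⟨x, y⟩ := b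
  obtain ⟨h1, h2, h3⟩ := hb
  unfold eop at h
  by_cases hm : memB l (eraw i (x, y))
  · rw [if_pos hm] at h
    injection h with h'
    subst h'
    refine ⟨hm, ?_⟩
    unfold memB at hm
    unfold Efun
    unfold eraw at hm ⊢
    by_cases hi : i = 0
    · subst hi
      simp only [reduceIte] at hm ⊢
      split_ifs at hm ⊢ <;> omega
    · simp only [hi, if_false] at hm ⊢
      omega
  · rw [if_neg hm] at h
    exact absurd h (by simp)

lemma fstep_none {l : ℤ} {i : ℕ} {b : ℤ × ℤ} (hb : memB l b) (h : fop l i b = none) :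
    Ffun l i b = 0 := by
  obtain ⟨x, y⟩ := b
  obtain ⟨h1, h2, h3⟩ := hb
  unfold fop at h
  by_cases hm : memB l (fraw i (x, y))
  · rw [if_pos hm] at h
    exact absurd h (by simp)
  · unfold memB at hm
    unfold Ffun
    unfold fraw at hm
    by_cases hi : i = 0
    · subst hi
      simp only [reduceIte] at hm ⊢
      split_ifs at hm ⊢ <;> omega
    · simp only [hi, if_false] at hm ⊢
      omega

lemma fstep_some {l : ℤ} {i : ℕ} {b b' : ℤ × ℤ} (hb : memB l b) (h : fop l i b = some b') :
    memB l b' ∧ Ffun l i b = Ffun l i b' + 1 := by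
  obtain ⟨x, y⟩ := b
  obtain ⟨h1, h2, h3⟩ := hb
  unfold fop at h
  by_cases hm : memB l (fraw i (x, y))
  · rw [if_pos hm] at h
    injection h with h'
    subst h'
    refine ⟨hm, ?_⟩
    unfold memB at hm
    unfold Ffun
    unfold fraw at hm ⊢
    by_cases hi : i = 0
    · subst hi
      simp only [reduceIte] at hm ⊢
      split_ifs at hm ⊢ <;> omega
    · simp only [hi, if_false] at hm ⊢
      omega
  · rw [if_neg hm] at h
    exact absurd h (by simp)

lemma eps_eq {l : ℤ} {i : ℕ} {b : ℤ × ℤ} (hb : memB l b) : eps l i b = Efun l i b := by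
  have hc := iter_char (eop l i) (memB l) (Efun l i)
    (fun b hb h => estep_none hb h) (fun b b' hb h => estep_some hb h)
  unfold eps
  have hs : {k : ℕ | iterOp (eop l i) k b ≠ none} = Set.Iic (Efun l i b) := by
    ext k; exact hc k b hb
  rw [hs, csSup_Iic]

lemma phi_eq {l : ℤ} {i : ℕ} {b : ℤ × ℤ} (hb : memB l b) : phi l i b = Ffun l i b := by
  have hc := iter_char (fop l i) (memB l) (Ffun l i)
    (fun b hb h => fstep_none hb h) (fun b b' hb h => fstep_some hb h)
  unfold phi
  have hs : {k : ℕ | iterOp (fop l i) k b ≠ none} = Set.Iic (Ffun l i b) := by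
    ext k; exact hc k b hb
  rw [hs, csSup_Iic]
lemma fraw_eraw (i : ℕ) (b : ℤ × ℤ) : fraw i (eraw i b) = b := by
  obtain ⟨x, y⟩ := b
  unfold eraw fraw
  by_cases hi : i = 0
  · subst hi
    simp only [reduceIte]
    split_ifs <;> simp_all <;> omega
  · simp only [hi, if_false]
    simp

lemma eraw_fraw (i : ℕ) (b : ℤ × ℤ) : eraw i (fraw i b) = b := by
  obtain ⟨x, y⟩ := b
  unfold eraw fraw
  by_cases hi : i = 0
  · subst hi
    simp only [reduceIte]
    split_ifs <;> simp_all <;> omega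
  · simp only [hi, if_false]
    simp

lemma eop_mem {l : ℤ} {i : ℕ} {b b' : ℤ × ℤ} (h : eop l i b = some b') : memB l b' := by
  unfold eop at h
  split_ifs at h with hm
  injection h with h'; subst h'; exact hm

lemma fop_mem {l : ℤ} {i : ℕ} {b b' : ℤ × ℤ} (h : fop l i b = some b') : memB l b' := by
  unfold fop at h
  split_ifs at h with hm
  injection h with h'; subst h'; exact hm

lemma eop_fop {l : ℤ} {i : ℕ} {b b' : ℤ × ℤ} (hb : memB l b) (h : eop l i b = some b') :
    fop l i b' = some b := by
  unfold eop at h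
  split_ifs at h with hm
  injection h with h'
  subst h'
  unfold fop
  rw [fraw_eraw, if_pos hb]

lemma fop_eop {l : ℤ} {i : ℕ} {b b' : ℤ × ℤ} (hb : memB l b) (h : fop l i b = some b') :
    eop l i b' = some b := by
  unfold fop at h
  split_ifs at h with hm
  injection h with h'
  subst h'
  unfold eop
  rw [eraw_fraw, if_pos hb]

lemma eps_eop {l : ℤ} {i : ℕ} {b b' : ℤ × ℤ} (hb : memB l b) (h : eop l i b = some b') :
    eps l i b = eps l i b' + 1 := by
  obtain ⟨hm, hE⟩ := estep_some hb h
  rw [eps_eq hb, eps_eq hm, hE]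

lemma phi_eop {l : ℤ} {i : ℕ} {b b' : ℤ × ℤ} (hb : memB l b) (h : eop l i b = some b') :
    phi l i b' = phi l i b + 1 := by
  have hm : memB l b' := eop_mem h
  have hf : fop l i b' = some b := eop_fop hb h
  obtain ⟨_, hF⟩ := fstep_some hm hf
  rw [phi_eq hb, phi_eq hm, hF]

lemma phi_fop {l : ℤ} {i : ℕ} {b b' : ℤ × ℤ} (hb : memB l b) (h : fop l i b = some b') :
    phi l i b = phi l i b' + 1 := by
  obtain ⟨hm, hF⟩ := fstep_some hb h
  rw [phi_eq hb, phi_eq hm, hF]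

lemma eps_fop {l : ℤ} {i : ℕ} {b b' : ℤ × ℤ} (hb : memB l b) (h : fop l i b = some b') :
    eps l i b' = eps l i b + 1 := by
  have hm : memB l b' := fop_mem h
  have he : eop l i b' = some b := fop_eop hb h
  obtain ⟨_, hE⟩ := estep_some hm he
  rw [eps_eq hb, eps_eq hm, hE]

lemma te_tf {l1 l2 : ℤ} {i : ℕ} {p q : (ℤ × ℤ) × (ℤ × ℤ)}
    (h1 : memB l1 p.1) (h2 : memB l2 p.2) (h : teop l1 l2 i p = some q) :
    tfop l1 l2 i q = some p := by
  unfold teop at h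
  split_ifs at h with hc
  · rcases he : eop l1 i p.1 with _ | b
    · rw [he] at h; exact absurd h (by simp)
    · rw [he] at h
      simp only [Option.map_some, Option.some.injEq] at h
      subst h
      unfold tfop
      simp only
      rw [if_pos (by rw [phi_eop h1 he]; omega)]
      rw [eop_fop h1 he]
      simp
  · rcases he : eop l2 i p.2 with _ | b'
    · rw [he] at h; exact absurd h (by simp)
    · rw [he] at h
      simp only [Option.map_some, Option.some.injEq] at h
      subst h
      unfold tfop
      simp only
      rw [if_neg (show ¬ eps l2 i b' < phi l1 i p.1 by have := eps_eop h2 he; omega)]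
      rw [eop_fop h2 he]
      simp
  
lemma tf_te {l1 l2 : ℤ} {i : ℕ} {p q : (ℤ × ℤ) × (ℤ × ℤ)}
    (h1 : memB l1 p.1) (h2 : memB l2 p.2) (h : tfop l1 l2 i p = some q) :
    teop l1 l2 i q = some p := by
  unfold tfop at h
  split_ifs at h with hc
  · rcases he : fop l1 i p.1 with _ | b
    · rw [he] at h; exact absurd h (by simp)
    · rw [he] at h
      simp only [Option.map_some, Option.some.injEq] at h
      subst h
      unfold teop
      simp only
      rw [if_pos (by rw [show phi l1 i p.1 = phi l1 i b + 1 from phi_fop h1 he] at hc; omega)]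
      rw [fop_eop h1 he]
      simp
  · rcases he : fop l2 i p.2 with _ | b'
    · rw [he] at h; exact absurd h (by simp)
    · rw [he] at h
      simp only [Option.map_some, Option.some.injEq] at h
      subst h
      unfold teop
      simp only
      rw [if_neg (by rw [eps_fop h2 he]; omega)]
      rw [fop_eop h2 he]
      simp

/-- One (undirected) edge of the crystal graph, recorded together with membership. -/
def CRel (l1 l2 : ℤ) (p q : (ℤ × ℤ) × (ℤ × ℤ)) : Prop :=
  (memB l1 p.1 ∧ memB l2 p.2) ∧
    ∃ i, (i = 0 ∨ i = 1) ∧ (teop l1 l2 i p = some q ∨ tfop l1 l2 i p = some q)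


lemma teop_mem {l1 l2 : ℤ} {i : ℕ} {p q : (ℤ × ℤ) × (ℤ × ℤ)}
    (h1 : memB l1 p.1) (h2 : memB l2 p.2) (h : teop l1 l2 i p = some q) :
    memB l1 q.1 ∧ memB l2 q.2 := by
  unfold teop at h
  split_ifs at h with hc
  · rcases he : eop l1 i p.1 with _ | b <;> rw [he] at h
    · exact absurd h (by simp)
    · simp only [Option.map_some, Option.some.injEq] at h
      subst h
      exact ⟨eop_mem he, h2⟩
  · rcases he : eop l2 i p.2 with _ | b <;> rw [he] at h
    · exact absurd h (by simp)
    · simp only [Option.map_some, Option.some.injEq] at h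
      subst h
      exact ⟨h1, eop_mem he⟩

lemma tfop_mem {l1 l2 : ℤ} {i : ℕ} {p q : (ℤ × ℤ) × (ℤ × ℤ)}
    (h1 : memB l1 p.1) (h2 : memB l2 p.2) (h : tfop l1 l2 i p = some q) :
    memB l1 q.1 ∧ memB l2 q.2 := by
  unfold tfop at h
  split_ifs at h with hc
  · rcases he : fop l1 i p.1 with _ | b <;> rw [he] at h
    · exact absurd h (by simp)
    · simp only [Option.map_some, Option.some.injEq] at h
      subst h
      exact ⟨fop_mem he, h2⟩
  · rcases he : fop l2 i p.2 with _ | b <;> rw [he] at h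
    · exact absurd h (by simp)
    · simp only [Option.map_some, Option.some.injEq] at h
      subst h
      exact ⟨h1, fop_mem he⟩

lemma rel_mem_right {l1 l2 : ℤ} {p q : (ℤ × ℤ) × (ℤ × ℤ)} (h : CRel l1 l2 p q) :
    memB l1 q.1 ∧ memB l2 q.2 := by
  obtain ⟨⟨h1, h2⟩, i, _, h3 | h3⟩ := h
  · exact teop_mem h1 h2 h3
  · exact tfop_mem h1 h2 h3

lemma rel_symm {l1 l2 : ℤ} {p q : (ℤ × ℤ) × (ℤ × ℤ)} (h : CRel l1 l2 p q) :
    CRel l1 l2 q p := by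
  have hq := rel_mem_right h
  obtain ⟨⟨h1, h2⟩, i, hi, h3 | h3⟩ := h
  · exact ⟨hq, i, hi, Or.inr (te_tf h1 h2 h3)⟩
  · exact ⟨hq, i, hi, Or.inl (tf_te h1 h2 h3)⟩

/-- Reachability in the crystal graph. -/
def Reach (l1 l2 : ℤ) : (ℤ × ℤ) × (ℤ × ℤ) → (ℤ × ℤ) × (ℤ × ℤ) → Prop :=
  Relation.ReflTransGen (CRel l1 l2)

lemma reach_symm {l1 l2 : ℤ} {p q : (ℤ × ℤ) × (ℤ × ℤ)} (h : Reach l1 l2 p q) :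
    Reach l1 l2 q p :=
  (@Relation.ReflTransGen.symmetric _ _ ⟨fun _ _ hr => rel_symm hr⟩).symm _ _ h

lemma reach_te {l1 l2 : ℤ} {i : ℕ} {p q : (ℤ × ℤ) × (ℤ × ℤ)} (hi : i = 0 ∨ i = 1)
    (h1 : memB l1 p.1) (h2 : memB l2 p.2) (h : teop l1 l2 i p = some q) :
    Reach l1 l2 p q :=
  Relation.ReflTransGen.single ⟨⟨h1, h2⟩, i, hi, Or.inl h⟩

lemma reach_tf {l1 l2 : ℤ} {i : ℕ} {p q : (ℤ × ℤ) × (ℤ × ℤ)} (hi : i = 0 ∨ i = 1)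
    (h1 : memB l1 p.1) (h2 : memB l2 p.2) (h : tfop l1 l2 i p = some q) :
    Reach l1 l2 p q :=
  Relation.ReflTransGen.single ⟨⟨h1, h2⟩, i, hi, Or.inr h⟩
lemma teop_left {l1 l2 : ℤ} {i : ℕ} {b c b' : ℤ × ℤ} (hb : memB l1 b) (hc : memB l2 c)
    (hcond : Efun l2 i c ≤ Ffun l1 i b) (he : eop l1 i b = some b') :
    teop l1 l2 i (b, c) = some (b', c) := by
  have hr : teop l1 l2 i (b, c) =
      if eps l2 i c ≤ phi l1 i b then (eop l1 i b).map (fun z => (z, c))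
      else (eop l2 i c).map (fun z => (b, z)) := rfl
  rw [hr, eps_eq hc, phi_eq hb, if_pos hcond, he]
  rfl

lemma teop_right {l1 l2 : ℤ} {i : ℕ} {b c c' : ℤ × ℤ} (hb : memB l1 b) (hc : memB l2 c)
    (hcond : ¬ Efun l2 i c ≤ Ffun l1 i b) (he : eop l2 i c = some c') :
    teop l1 l2 i (b, c) = some (b, c') := by
  have hr : teop l1 l2 i (b, c) =
      if eps l2 i c ≤ phi l1 i b then (eop l1 i b).map (fun z => (z, c))
      else (eop l2 i c).map (fun z => (b, z)) := rfl
  rw [hr, eps_eq hc, phi_eq hb, if_neg hcond, he]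
  rfl

lemma tfop_left {l1 l2 : ℤ} {i : ℕ} {b c b' : ℤ × ℤ} (hb : memB l1 b) (hc : memB l2 c)
    (hcond : Efun l2 i c < Ffun l1 i b) (he : fop l1 i b = some b') :
    tfop l1 l2 i (b, c) = some (b', c) := by
  have hr : tfop l1 l2 i (b, c) =
      if eps l2 i c < phi l1 i b then (fop l1 i b).map (fun z => (z, c))
      else (fop l2 i c).map (fun z => (b, z)) := rfl
  rw [hr, eps_eq hc, phi_eq hb, if_pos hcond, he]
  rfl

lemma tfop_right {l1 l2 : ℤ} {i : ℕ} {b c c' : ℤ × ℤ} (hb : memB l1 b) (hc : memB l2 c)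
    (hcond : ¬ Efun l2 i c < Ffun l1 i b) (he : fop l2 i c = some c') :
    tfop l1 l2 i (b, c) = some (b, c') := by
  have hr : tfop l1 l2 i (b, c) =
      if eps l2 i c < phi l1 i b then (fop l1 i b).map (fun z => (z, c))
      else (fop l2 i c).map (fun z => (b, z)) := rfl
  rw [hr, eps_eq hc, phi_eq hb, if_neg hcond, he]
  rfl

lemma eraw_one (x y : ℤ) : eraw 1 (x, y) = (x + 1, y - 1) := by unfold eraw; norm_num
lemma fraw_one (x y : ℤ) : fraw 1 (x, y) = (x - 1, y + 1) := by unfold fraw; norm_num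
lemma eraw_zero_lt {x y : ℤ} (h : y < x) : eraw 0 (x, y) = (x - 1, y) := by
  unfold eraw; norm_num; omega
lemma eraw_zero_ge {x y : ℤ} (h : x ≤ y) : eraw 0 (x, y) = (x, y + 1) := by
  unfold eraw; norm_num; omega
lemma fraw_zero_ge {x y : ℤ} (h : y ≤ x) : fraw 0 (x, y) = (x + 1, y) := by
  unfold fraw; norm_num; omega
lemma fraw_zero_lt {x y : ℤ} (h : x < y) : fraw 0 (x, y) = (x, y - 1) := by
  unfold fraw; norm_num; omega

lemma eop_one {l x y : ℤ} (h0 : 0 ≤ x) (h1 : 1 ≤ y) (h2 : x + y ≤ l) :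
    eop l 1 (x, y) = some (x + 1, y - 1) := by
  unfold eop
  rw [eraw_one, if_pos (memB_mk (by omega) (by omega) (by omega))]

lemma fop_one {l x y : ℤ} (h0 : 1 ≤ x) (h1 : 0 ≤ y) (h2 : x + y ≤ l) :
    fop l 1 (x, y) = some (x - 1, y + 1) := by
  unfold fop
  rw [fraw_one, if_pos (memB_mk (by omega) (by omega) (by omega))]

lemma eop_zero_lt {l x y : ℤ} (h : y < x) (h1 : 0 ≤ y) (h2 : x + y ≤ l) :
    eop l 0 (x, y) = some (x - 1, y) := by
  unfold eop
  rw [eraw_zero_lt h, if_pos (memB_mk (by omega) (by omega) (by omega))]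

lemma eop_zero_ge {l x y : ℤ} (h : x ≤ y) (h1 : 0 ≤ x) (h2 : x + y + 1 ≤ l) :
    eop l 0 (x, y) = some (x, y + 1) := by
  unfold eop
  rw [eraw_zero_ge h, if_pos (memB_mk (by omega) (by omega) (by omega))]

lemma fop_zero_ge {l x y : ℤ} (h : y ≤ x) (h1 : 0 ≤ y) (h2 : x + y + 1 ≤ l) :
    fop l 0 (x, y) = some (x + 1, y) := by
  unfold fop
  rw [fraw_zero_ge h, if_pos (memB_mk (by omega) (by omega) (by omega))]

lemma fop_zero_lt {l x y : ℤ} (h : x < y) (h1 : 0 ≤ x) (h2 : x + y ≤ l) :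
    fop l 0 (x, y) = some (x, y - 1) := by
  unfold fop
  rw [fraw_zero_lt h, if_pos (memB_mk (by omega) (by omega) (by omega))]
section Order1

/-- Phase B: raise the left factor with `ẽ₁` until its second coordinate is `0`. -/
lemma reach1_B (l : ℤ) {c : ℤ × ℤ} (hc : memB 1 c) :
    ∀ k : ℕ, ∀ x y : ℤ, 0 ≤ x → c.2 ≤ x → 0 ≤ y → x + y ≤ l → y = k →
      Reach l 1 ((x, y), c) ((x + y, 0), c) := by
  intro k
  induction k with
  | zero =>
      intro x y _ _ _ _ hy
      rw [hy]
      push_cast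
      rw [add_zero]
      exact Relation.ReflTransGen.refl
  | succ k ih =>
      intro x y h0 h1 h2 h3 hy
      have hy1 : 1 ≤ y := by omega
      have hb : memB l (x, y) := memB_mk h0 h2 h3
      have step : teop l 1 1 ((x, y), c) = some ((x + 1, y - 1), c) :=
        teop_left hb hc
          (by simp only [Efun, Ffun]; norm_num; obtain ⟨a1, a2, a3⟩ := hc; omega)
          (eop_one h0 hy1 h3)
      have hr := reach_te (Or.inr rfl) hb hc step
      have ht := ih (x + 1) (y - 1) (by omega) (by omega) (by omega) (by omega) (by omega)
      rw [show x + y = x + 1 + (y - 1) by ring]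
      exact hr.trans ht

/-- Phase A: if the left factor has `x = 0` and the right factor is `3`, `ẽ₁` acts on the right. -/
lemma reach1_A (l : ℤ) {y : ℤ} (h2 : 0 ≤ y) (h3 : y ≤ l) :
    Reach l 1 ((0, y), (0, 1)) ((0, y), (1, 0)) := by
  have hb : memB l ((0 : ℤ), y) := memB_mk le_rfl h2 (by omega)
  have hc : memB 1 ((0 : ℤ), (1 : ℤ)) := memB_mk le_rfl one_pos.le (by omega)
  have he : eop 1 1 ((0 : ℤ), (1 : ℤ)) = some (1, 0) := by
    have := eop_one (l := 1) (x := 0) (y := 1) le_rfl le_rfl (by omega)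
    norm_num at this
    exact this
  exact reach_te (Or.inr rfl) hb hc
    (teop_right hb hc (by simp [Efun, Ffun]) he)

/-- Phase C for `c = 2`: push `x` up with `f̃₀`. -/
lemma reach1_C2push (l : ℤ) :
    ∀ k : ℕ, ∀ x : ℤ, 0 ≤ x → x + k ≤ l - 1 →
      Reach l 1 ((x, 0), (0, 0)) ((x + k, 0), (0, 0)) := by
  intro k
  induction k with
  | zero => intro x _ _; push_cast; rw [add_zero]; exact Relation.ReflTransGen.refl
  | succ k ih =>
      intro x h0 h1
      have hb : memB l (x, (0 : ℤ)) := memB_mk h0 le_rfl (by push_cast at h1; omega)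
      have hc : memB 1 ((0 : ℤ), (0 : ℤ)) := memB_mk le_rfl le_rfl (by omega)
      have step : tfop l 1 0 ((x, 0), (0, 0)) = some ((x + 1, 0), (0, 0)) :=
        tfop_left hb hc
          (by simp only [Efun, Ffun]; norm_num; push_cast at h1; omega)
          (fop_zero_ge h0 le_rfl (by push_cast at h1; omega))
      have hr := reach_tf (Or.inl rfl) hb hc step
      have ht := ih (x + 1) (by omega) (by push_cast at h1 ⊢; omega)
      push_cast
      rw [show x + ((k : ℤ) + 1) = x + 1 + (k : ℤ) by ring]
      push_cast at ht
      exact hr.trans ht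

/-- Phase C for `c = 2` at the wall: `f̃₀` turns `2` into `1`. -/
lemma reach1_C2conv (l : ℤ) {x : ℤ} (h0 : 0 ≤ x) (h1 : l - 1 ≤ x) (h2 : x ≤ l) :
    Reach l 1 ((x, 0), (0, 0)) ((x, 0), (1, 0)) := by
  have hb : memB l (x, (0 : ℤ)) := memB_mk h0 le_rfl (by omega)
  have hc : memB 1 ((0 : ℤ), (0 : ℤ)) := memB_mk le_rfl le_rfl (by omega)
  have hf : fop 1 0 ((0 : ℤ), (0 : ℤ)) = some (1, 0) := by
    have := fop_zero_ge (l := 1) (x := 0) (y := 0) le_rfl le_rfl (by omega)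
    norm_num at this
    exact this
  exact reach_tf (Or.inl rfl) hb hc
    (tfop_right hb hc (by simp only [Efun, Ffun]; norm_num; omega) hf)

/-- Phase C for `c = 3`: push `x` up with `f̃₀`. -/
lemma reach1_C3push (l : ℤ) :
    ∀ k : ℕ, ∀ x : ℤ, 0 ≤ x → x + k ≤ l →
      Reach l 1 ((x, 0), (0, 1)) ((x + k, 0), (0, 1)) := by
  intro k
  induction k with
  | zero => intro x _ _; push_cast; rw [add_zero]; exact Relation.ReflTransGen.refl
  | succ k ih =>
      intro x h0 h1
      have hb : memB l (x, (0 : ℤ)) := memB_mk h0 le_rfl (by push_cast at h1; omega)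
      have hc : memB 1 ((0 : ℤ), (1 : ℤ)) := memB_mk le_rfl one_pos.le (by omega)
      have step : tfop l 1 0 ((x, 0), (0, 1)) = some ((x + 1, 0), (0, 1)) :=
        tfop_left hb hc
          (by simp only [Efun, Ffun]; norm_num; push_cast at h1; omega)
          (fop_zero_ge h0 le_rfl (by push_cast at h1; omega))
      have hr := reach_tf (Or.inl rfl) hb hc step
      have ht := ih (x + 1) (by omega) (by push_cast at h1 ⊢; omega)
      push_cast
      rw [show x + ((k : ℤ) + 1) = x + 1 + (k : ℤ) by ring]
      push_cast at ht
      exact hr.trans ht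

/-- Phase C for `c = 3` at the wall: `f̃₀` turns `3` into `2`. -/
lemma reach1_C3conv (l : ℤ) (hl : 1 ≤ l) :
    Reach l 1 ((l, 0), (0, 1)) ((l, 0), (0, 0)) := by
  have hb : memB l (l, (0 : ℤ)) := memB_mk (by omega) le_rfl (by omega)
  have hc : memB 1 ((0 : ℤ), (1 : ℤ)) := memB_mk le_rfl one_pos.le (by omega)
  have hf : fop 1 0 ((0 : ℤ), (1 : ℤ)) = some (0, 0) := by
    have := fop_zero_lt (l := 1) (x := 0) (y := 1) (by omega) le_rfl (by omega)
    norm_num at this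
    exact this
  exact reach_tf (Or.inl rfl) hb hc
    (tfop_right hb hc (by simp only [Efun, Ffun]; norm_num; split_ifs <;> omega) hf)

/-- Phase D, first half: `f̃₁` moves the left factor to the `x = 0` wall. -/
lemma reach1_D1 (l : ℤ) :
    ∀ k : ℕ, ∀ x y : ℤ, 0 ≤ y → 0 ≤ x → x + y ≤ l → x = k →
      Reach l 1 ((x, y), (1, 0)) ((0, x + y), (1, 0)) := by
  intro k
  induction k with
  | zero =>
      intro x y _ _ _ hx
      rw [hx]
      push_cast
      rw [zero_add]
      exact Relation.ReflTransGen.refl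
  | succ k ih =>
      intro x y h0 h1 h2 hx
      have hx1 : 1 ≤ x := by omega
      have hb : memB l (x, y) := memB_mk h1 h0 h2
      have hc : memB 1 ((1 : ℤ), (0 : ℤ)) := memB_mk one_pos.le le_rfl (by omega)
      have step : tfop l 1 1 ((x, y), (1, 0)) = some ((x - 1, y + 1), (1, 0)) :=
        tfop_left hb hc
          (by simp only [Efun, Ffun]; norm_num; omega)
          (fop_one hx1 h0 h2)
      have hr := reach_tf (Or.inr rfl) hb hc step
      have ht := ih (x - 1) (y + 1) (by omega) (by omega) (by omega) (by omega)
      rw [show x + y = x - 1 + (y + 1) by ring]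
      exact hr.trans ht

/-- Phase D, second half (needs `l ≥ 2`): `f̃₀` moves the left factor down the wall. -/
lemma reach1_D2 (l : ℤ) (hl : 2 ≤ l) :
    ∀ k : ℕ, ∀ y : ℤ, 0 ≤ y → y ≤ l → y = k →
      Reach l 1 ((0, y), (1, 0)) ((0, 0), (1, 0)) := by
  intro k
  induction k with
  | zero => intro y _ _ hy; rw [hy]; push_cast; exact Relation.ReflTransGen.refl
  | succ k ih =>
      intro y h0 h1 hy
      have hy1 : 1 ≤ y := by omega
      have hb : memB l ((0 : ℤ), y) := memB_mk le_rfl h0 (by omega)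
      have hc : memB 1 ((1 : ℤ), (0 : ℤ)) := memB_mk one_pos.le le_rfl (by omega)
      have step : tfop l 1 0 ((0, y), (1, 0)) = some ((0, y - 1), (1, 0)) :=
        tfop_left hb hc
          (by simp only [Efun, Ffun]; norm_num; omega)
          (fop_zero_lt (by omega) le_rfl (by omega))
      have hr := reach_tf (Or.inl rfl) hb hc step
      exact hr.trans (ih (y - 1) (by omega) (by omega) (by omega))

/-- The `l = 1` bridge from `((1,0),1)` to the base point. -/
lemma reach1_bridge : Reach 1 1 ((1, 0), (1, 0)) ((0, 0), (1, 0)) := by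
  have m10 : memB 1 ((1 : ℤ), (0 : ℤ)) := memB_mk one_pos.le le_rfl (by omega)
  have m00 : memB 1 ((0 : ℤ), (0 : ℤ)) := memB_mk le_rfl le_rfl (by omega)
  have m01 : memB 1 ((0 : ℤ), (1 : ℤ)) := memB_mk le_rfl one_pos.le (by omega)
  have s1 : teop 1 1 0 ((1, 0), (1, 0)) = some ((1, 0), (0, 0)) := by
    have he : eop 1 0 ((1 : ℤ), (0 : ℤ)) = some (0, 0) := by
      have := eop_zero_lt (l := 1) (x := 1) (y := 0) (by omega) le_rfl (by omega)
      norm_num at this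
      exact this
    exact teop_right m10 m10 (by simp [Efun, Ffun]) he
  have s2 : teop 1 1 0 ((1, 0), (0, 0)) = some ((1, 0), (0, 1)) := by
    have he : eop 1 0 ((0 : ℤ), (0 : ℤ)) = some (0, 1) := by
      have := eop_zero_ge (l := 1) (x := 0) (y := 0) le_rfl le_rfl (by omega)
      norm_num at this
      exact this
    exact teop_right m10 m00 (by simp [Efun, Ffun]) he
  have s3 : teop 1 1 0 ((1, 0), (0, 1)) = some ((0, 0), (0, 1)) := by
    have he : eop 1 0 ((1 : ℤ), (0 : ℤ)) = some (0, 0) := by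
      have := eop_zero_lt (l := 1) (x := 1) (y := 0) (by omega) le_rfl (by omega)
      norm_num at this
      exact this
    exact teop_left m10 m01 (by simp [Efun, Ffun]) he
  have s4 : teop 1 1 1 ((0, 0), (0, 1)) = some ((0, 0), (1, 0)) := by
    have he : eop 1 1 ((0 : ℤ), (1 : ℤ)) = some (1, 0) := by
      have := eop_one (l := 1) (x := 0) (y := 1) le_rfl le_rfl (by omega)
      norm_num at this
      exact this
    exact teop_right m00 m01 (by simp [Efun, Ffun]) he
  exact ((reach_te (Or.inl rfl) m10 m10 s1).trans
    ((reach_te (Or.inl rfl) m10 m00 s2).trans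
      ((reach_te (Or.inl rfl) m10 m01 s3).trans
        (reach_te (Or.inr rfl) m00 m01 s4))))

/-- Phase D assembled. -/
lemma reach1_D (l : ℤ) (hl : 1 ≤ l) {t : ℤ} (h0 : 0 ≤ t) (h1 : t ≤ l) :
    Reach l 1 ((t, 0), (1, 0)) ((0, 0), (1, 0)) := by
  rcases lt_or_ge l 2 with hl1 | hl2
  · have hle : l = 1 := by omega
    subst hle
    have : t = 0 ∨ t = 1 := by omega
    rcases this with rfl | rfl
    · exact Relation.ReflTransGen.refl
    · exact reach1_bridge
  · have h2 := reach1_D1 l t.toNat t 0 le_rfl h0 (by omega) (by omega)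
    rw [add_zero] at h2
    exact h2.trans (reach1_D2 l hl2 t.toNat t h0 h1 (by omega))

/-- Phase C assembled : from `((s,0),c)` to the base point. -/
lemma reach1_C (l : ℤ) (hl : 1 ≤ l) {s : ℤ} (h0 : 0 ≤ s) (h1 : s ≤ l)
    {c : ℤ × ℤ} (hc : memB 1 c) :
    Reach l 1 ((s, 0), c) ((0, 0), (1, 0)) := by
  obtain ⟨cx, cy⟩ := c
  obtain ⟨a1, a2, a3⟩ := hc
  simp only at a1 a2 a3
  have hcase : (cx = 1 ∧ cy = 0) ∨ (cx = 0 ∧ cy = 0) ∨ (cx = 0 ∧ cy = 1) := by omega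
  rcases hcase with ⟨rfl, rfl⟩ | ⟨rfl, rfl⟩ | ⟨rfl, rfl⟩
  · exact reach1_D l hl h0 h1
  · rcases le_or_gt s (l - 1) with hs | hs
    · have hp := reach1_C2push l (l - 1 - s).toNat s h0 (by omega)
      rw [show s + ((l - 1 - s).toNat : ℤ) = l - 1 by omega] at hp
      exact hp.trans ((reach1_C2conv l (by omega) (by omega) (by omega)).trans
        (reach1_D l hl (by omega) (by omega)))
    · have hsl : s = l := by omega
      rw [hsl]
      exact (reach1_C2conv l (by omega) (by omega) le_rfl).trans
        (reach1_D l hl (by omega) le_rfl)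
  · have hp := reach1_C3push l (l - s).toNat s h0 (by omega)
    rw [show s + ((l - s).toNat : ℤ) = l by omega] at hp
    exact hp.trans ((reach1_C3conv l hl).trans
      ((reach1_C2conv l (by omega) (by omega) le_rfl).trans
        (reach1_D l hl (by omega) le_rfl)))

/-- Every element of `B_l ⊗ B₁` reaches the base point `((0,0),1)`. -/
lemma reach1_main (l : ℤ) (hl : 1 ≤ l) {b c : ℤ × ℤ} (hb : memB l b) (hc : memB 1 c) :
    Reach l 1 (b, c) ((0, 0), (1, 0)) := by
  obtain ⟨x, y⟩ := b
  obtain ⟨h0, h1, h2⟩ := hb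
  simp only at h0 h1 h2
  obtain ⟨cx, cy⟩ := c
  obtain ⟨a1, a2, a3⟩ := hc
  simp only at a1 a2 a3
  by_cases hA : cx = 0 ∧ cy = 1 ∧ x = 0
  · obtain ⟨rfl, rfl, rfl⟩ := hA
    refine (reach1_A l h1 (by omega)).trans ?_
    have hB := reach1_B l (show memB 1 ((1 : ℤ), (0 : ℤ)) from memB_mk one_pos.le le_rfl
      (by omega)) y.toNat 0 y le_rfl (by simp) h1 (by omega) (by omega)
    rw [zero_add] at hB
    exact hB.trans (reach1_C l hl h1 (by omega)
      (memB_mk one_pos.le le_rfl (by omega)))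
  · have hcy : cy ≤ x := by
      rcases (by omega : (cx = 1 ∧ cy = 0) ∨ (cx = 0 ∧ cy = 0) ∨ (cx = 0 ∧ cy = 1))
        with ⟨_, rfl⟩ | ⟨_, rfl⟩ | ⟨h1', h2'⟩
      · exact h0
      · exact h0
      · omega
    have hB := reach1_B l (show memB 1 (cx, cy) from ⟨a1, a2, a3⟩) y.toNat x y h0 hcy h1 h2
      (by omega)
    exact hB.trans (reach1_C l hl (by omega) (by omega) ⟨a1, a2, a3⟩)

end Order1
section Order2

/-- Phase A': turn `1` into `3` on the left when the right factor has `y = 0`. -/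
lemma reach2_A (l : ℤ) {x : ℤ} (h0 : 0 ≤ x) (h1 : x ≤ l) :
    Reach 1 l ((1, 0), (x, 0)) ((0, 1), (x, 0)) := by
  have hc : memB 1 ((1 : ℤ), (0 : ℤ)) := memB_mk one_pos.le le_rfl (by omega)
  have hb : memB l (x, (0 : ℤ)) := memB_mk h0 le_rfl (by omega)
  have hf : fop 1 1 ((1 : ℤ), (0 : ℤ)) = some (0, 1) := by
    have := fop_one (l := 1) (x := 1) (y := 0) le_rfl le_rfl (by omega)
    norm_num at this
    exact this
  exact reach_tf (Or.inr rfl) hc hb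
    (tfop_left hc hb (by simp [Efun, Ffun]) hf)

/-- Phase B': push the right factor to the `x = 0` wall with `f̃₁`. -/
lemma reach2_B (l : ℤ) {c : ℤ × ℤ} (hc : memB 1 c) :
    ∀ k : ℕ, ∀ x y : ℤ, 0 ≤ x → c.1 ≤ y → 0 ≤ y → x + y ≤ l → x = k →
      Reach 1 l (c, (x, y)) (c, (0, x + y)) := by
  intro k
  induction k with
  | zero =>
      intro x y _ _ _ _ hx
      rw [hx]
      push_cast
      rw [zero_add]
      exact Relation.ReflTransGen.refl
  | succ k ih =>
      intro x y h0 h1 h2 h3 hx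
      have hx1 : 1 ≤ x := by omega
      have hb : memB l (x, y) := memB_mk h0 h2 h3
      have step : tfop 1 l 1 (c, (x, y)) = some (c, (x - 1, y + 1)) :=
        tfop_right hc hb
          (by simp only [Efun, Ffun]; norm_num; obtain ⟨a1, a2, a3⟩ := hc; omega)
          (fop_one hx1 h2 h3)
      have hr := reach_tf (Or.inr rfl) hc hb step
      have ht := ih (x - 1) (y + 1) (by omega) (by omega) (by omega) (by omega) (by omega)
      rw [show x + y = x - 1 + (y + 1) by ring]
      exact hr.trans ht

/-- Phase C' for `c = 1`: walk the right factor down the wall with `f̃₀`. -/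
lemma reach2_C1 (l : ℤ) :
    ∀ k : ℕ, ∀ m : ℤ, 0 ≤ m → m ≤ l → m = k →
      Reach 1 l ((1, 0), (0, m)) ((1, 0), (0, 0)) := by
  intro k
  induction k with
  | zero => intro m _ _ hm; rw [hm]; push_cast; exact Relation.ReflTransGen.refl
  | succ k ih =>
      intro m h0 h1 hm
      have hm1 : 1 ≤ m := by omega
      have hc : memB 1 ((1 : ℤ), (0 : ℤ)) := memB_mk one_pos.le le_rfl (by omega)
      have hb : memB l ((0 : ℤ), m) := memB_mk le_rfl h0 (by omega)
      have step : tfop 1 l 0 ((1, 0), (0, m)) = some ((1, 0), (0, m - 1)) :=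
        tfop_right hc hb
          (by simp only [Efun, Ffun]; norm_num)
          (fop_zero_lt (by omega) le_rfl (by omega))
      have hr := reach_tf (Or.inl rfl) hc hb step
      exact hr.trans (ih (m - 1) (by omega) (by omega) (by omega))

/-- Phase C' for `c = 2`: walk the right factor down while `m ≤ l - 1`. -/
lemma reach2_C2 (l : ℤ) :
    ∀ k : ℕ, ∀ m : ℤ, 0 ≤ m → m ≤ l - 1 → m = k →
      Reach 1 l ((0, 0), (0, m)) ((0, 0), (0, 0)) := by
  intro k
  induction k with
  | zero => intro m _ _ hm; rw [hm]; push_cast; exact Relation.ReflTransGen.refl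
  | succ k ih =>
      intro m h0 h1 hm
      have hm1 : 1 ≤ m := by omega
      have hc : memB 1 ((0 : ℤ), (0 : ℤ)) := memB_mk le_rfl le_rfl (by omega)
      have hb : memB l ((0 : ℤ), m) := memB_mk le_rfl h0 (by omega)
      have step : tfop 1 l 0 ((0, 0), (0, m)) = some ((0, 0), (0, m - 1)) :=
        tfop_right hc hb
          (by simp only [Efun, Ffun]; norm_num; omega)
          (fop_zero_lt (by omega) le_rfl (by omega))
      have hr := reach_tf (Or.inl rfl) hc hb step
      exact hr.trans (ih (m - 1) (by omega) (by omega) (by omega))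

/-- Phase C' for `c = 3`: walk the right factor down while `m ≤ l - 2`. -/
lemma reach2_C3 (l : ℤ) :
    ∀ k : ℕ, ∀ m : ℤ, 0 ≤ m → m ≤ l - 2 → m = k →
      Reach 1 l ((0, 1), (0, m)) ((0, 1), (0, 0)) := by
  intro k
  induction k with
  | zero => intro m _ _ hm; rw [hm]; push_cast; exact Relation.ReflTransGen.refl
  | succ k ih =>
      intro m h0 h1 hm
      have hm1 : 1 ≤ m := by omega
      have hc : memB 1 ((0 : ℤ), (1 : ℤ)) := memB_mk le_rfl one_pos.le (by omega)
      have hb : memB l ((0 : ℤ), m) := memB_mk le_rfl h0 (by omega)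
      have step : tfop 1 l 0 ((0, 1), (0, m)) = some ((0, 1), (0, m - 1)) :=
        tfop_right hc hb
          (by simp only [Efun, Ffun]; norm_num; omega)
          (fop_zero_lt (by omega) le_rfl (by omega))
      have hr := reach_tf (Or.inl rfl) hc hb step
      exact hr.trans (ih (m - 1) (by omega) (by omega) (by omega))

/-- `f̃₀` turns `2` into `1` when `m = l`. -/
lemma reach2_N4 (l : ℤ) {m : ℤ} (h0 : 0 ≤ m) (h1 : l ≤ m) (h2 : m ≤ l) :
    Reach 1 l ((0, 0), (0, m)) ((1, 0), (0, m)) := by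
  have hc : memB 1 ((0 : ℤ), (0 : ℤ)) := memB_mk le_rfl le_rfl (by omega)
  have hb : memB l ((0 : ℤ), m) := memB_mk le_rfl h0 (by omega)
  have hf : fop 1 0 ((0 : ℤ), (0 : ℤ)) = some (1, 0) := by
    have := fop_zero_ge (l := 1) (x := 0) (y := 0) le_rfl le_rfl (by omega)
    norm_num at this
    exact this
  exact reach_tf (Or.inl rfl) hc hb
    (tfop_left hc hb (by simp only [Efun, Ffun]; norm_num; omega) hf)

/-- `f̃₀` turns `3` into `2` when `m ≥ l - 1`. -/
lemma reach2_N5 (l : ℤ) {m : ℤ} (h0 : 0 ≤ m) (h1 : l - 1 ≤ m) (h2 : m ≤ l) :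
    Reach 1 l ((0, 1), (0, m)) ((0, 0), (0, m)) := by
  have hc : memB 1 ((0 : ℤ), (1 : ℤ)) := memB_mk le_rfl one_pos.le (by omega)
  have hb : memB l ((0 : ℤ), m) := memB_mk le_rfl h0 (by omega)
  have hf : fop 1 0 ((0 : ℤ), (1 : ℤ)) = some (0, 0) := by
    have := fop_zero_lt (l := 1) (x := 0) (y := 1) (by omega) le_rfl (by omega)
    norm_num at this
    exact this
  exact reach_tf (Or.inl rfl) hc hb
    (tfop_left hc hb (by simp only [Efun, Ffun]; norm_num; omega) hf)

/-- Phase D': push the right factor up the wall with `ẽ₀` while `c = 2`. -/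
lemma reach2_N6 (l : ℤ) :
    ∀ k : ℕ, ∀ m : ℤ, 0 ≤ m → m + k ≤ l - 1 →
      Reach 1 l ((0, 0), (0, m)) ((0, 0), (0, m + k)) := by
  intro k
  induction k with
  | zero => intro m _ _; push_cast; rw [add_zero]; exact Relation.ReflTransGen.refl
  | succ k ih =>
      intro m h0 h1
      push_cast at h1
      have hc : memB 1 ((0 : ℤ), (0 : ℤ)) := memB_mk le_rfl le_rfl (by omega)
      have hb : memB l ((0 : ℤ), m) := memB_mk le_rfl h0 (by omega)
      have step : teop 1 l 0 ((0, 0), (0, m)) = some ((0, 0), (0, m + 1)) :=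
        teop_right hc hb
          (by simp only [Efun, Ffun]; norm_num; omega)
          (eop_zero_ge h0 le_rfl (by omega))
      have hr := reach_te (Or.inl rfl) hc hb step
      have ht := ih (m + 1) (by omega) (by omega)
      push_cast
      rw [show m + ((k : ℤ) + 1) = m + 1 + (k : ℤ) by ring]
      push_cast at ht
      exact hr.trans ht

/-- `ẽ₀` turns `2` into `3` at the top of the wall. -/
lemma reach2_N7 (l : ℤ) (hl : 1 ≤ l) :
    Reach 1 l ((0, 0), (0, l - 1)) ((0, 1), (0, l - 1)) := by
  have hc : memB 1 ((0 : ℤ), (0 : ℤ)) := memB_mk le_rfl le_rfl (by omega)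
  have hb : memB l ((0 : ℤ), l - 1) := memB_mk le_rfl (by omega) (by omega)
  have he : eop 1 0 ((0 : ℤ), (0 : ℤ)) = some (0, 1) := by
    have := eop_zero_ge (l := 1) (x := 0) (y := 0) le_rfl le_rfl (by omega)
    norm_num at this
    exact this
  exact reach_te (Or.inl rfl) hc hb
    (teop_left hc hb (by simp only [Efun, Ffun]; norm_num; omega) he)

/-- Phase D': move the right factor back with `ẽ₁` while `c = 3`. -/
lemma reach2_N8 (l : ℤ) :
    ∀ k : ℕ, ∀ x m : ℤ, 0 ≤ x → 0 ≤ m → x + m ≤ l → m = k →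
      Reach 1 l ((0, 1), (x, m)) ((0, 1), (x + m, 0)) := by
  intro k
  induction k with
  | zero =>
      intro x m _ _ _ hm
      rw [hm]
      push_cast
      rw [add_zero]
      exact Relation.ReflTransGen.refl
  | succ k ih =>
      intro x m h0 h1 h2 hm
      have hm1 : 1 ≤ m := by omega
      have hc : memB 1 ((0 : ℤ), (1 : ℤ)) := memB_mk le_rfl one_pos.le (by omega)
      have hb : memB l (x, m) := memB_mk h0 h1 h2
      have step : teop 1 l 1 ((0, 1), (x, m)) = some ((0, 1), (x + 1, m - 1)) :=
        teop_right hc hb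
          (by simp only [Efun, Ffun]; norm_num; omega)
          (eop_one h0 hm1 h2)
      have hr := reach_te (Or.inr rfl) hc hb step
      have ht := ih (x + 1) (m - 1) (by omega) (by omega) (by omega) (by omega)
      rw [show x + m = x + 1 + (m - 1) by ring]
      exact hr.trans ht

/-- `ẽ₁` turns `3` into `1` when the right factor has `y = 0`. -/
lemma reach2_N9 (l : ℤ) {x : ℤ} (h0 : 0 ≤ x) (h1 : x ≤ l) :
    Reach 1 l ((0, 1), (x, 0)) ((1, 0), (x, 0)) := by
  have hc : memB 1 ((0 : ℤ), (1 : ℤ)) := memB_mk le_rfl one_pos.le (by omega)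
  have hb : memB l (x, (0 : ℤ)) := memB_mk h0 le_rfl (by omega)
  have he : eop 1 1 ((0 : ℤ), (1 : ℤ)) = some (1, 0) := by
    have := eop_one (l := 1) (x := 0) (y := 1) le_rfl le_rfl (by omega)
    norm_num at this
    exact this
  exact reach_te (Or.inr rfl) hc hb
    (teop_left hc hb (by simp [Efun, Ffun]) he)

/-- Phase D': walk the right factor down the axis with `ẽ₀` while `c = 1`. -/
lemma reach2_N10 (l : ℤ) (hl : 1 ≤ l) :
    ∀ k : ℕ, ∀ x : ℤ, 0 ≤ x → x ≤ l → x = k →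
      Reach 1 l ((1, 0), (x, 0)) ((1, 0), (0, 0)) := by
  intro k
  induction k with
  | zero => intro x _ _ hx; rw [hx]; push_cast; exact Relation.ReflTransGen.refl
  | succ k ih =>
      intro x h0 h1 hx
      have hx1 : 1 ≤ x := by omega
      have hc : memB 1 ((1 : ℤ), (0 : ℤ)) := memB_mk one_pos.le le_rfl (by omega)
      have hb : memB l (x, (0 : ℤ)) := memB_mk h0 le_rfl (by omega)
      have step : teop 1 l 0 ((1, 0), (x, 0)) = some ((1, 0), (x - 1, 0)) :=
        teop_right hc hb
          (by simp only [Efun, Ffun]; norm_num; omega)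
          (eop_zero_lt (by omega) le_rfl (by omega))
      have hr := reach_te (Or.inl rfl) hc hb step
      exact hr.trans (ih (x - 1) (by omega) (by omega) (by omega))

/-- Phase D' assembled: from `(2, (0,0))` to the base point `(1, (0,0))`. -/
lemma reach2_D (l : ℤ) (hl : 1 ≤ l) :
    Reach 1 l ((0, 0), (0, 0)) ((1, 0), (0, 0)) := by
  have h6 := reach2_N6 l (l - 1).toNat 0 le_rfl (by omega)
  rw [show (0 : ℤ) + ((l - 1).toNat : ℤ) = l - 1 by omega] at h6
  have h8 := reach2_N8 l (l - 1).toNat 0 (l - 1) le_rfl (by omega) (by omega) (by omega)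
  rw [show (0 : ℤ) + (l - 1) = l - 1 by ring] at h8
  exact h6.trans ((reach2_N7 l hl).trans (h8.trans
    ((reach2_N9 l (by omega) (by omega)).trans
      (reach2_N10 l hl (l - 1).toNat (l - 1) (by omega) (by omega) (by omega)))))

/-- The wall ladder: from `(c, (0, m))` to the base point. -/
lemma reach2_C (l : ℤ) (hl : 1 ≤ l) {m : ℤ} (h0 : 0 ≤ m) (h1 : m ≤ l)
    {c : ℤ × ℤ} (hc : memB 1 c) :
    Reach 1 l (c, (0, m)) ((1, 0), (0, 0)) := by
  obtain ⟨cx, cy⟩ := c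
  obtain ⟨a1, a2, a3⟩ := hc
  simp only at a1 a2 a3
  have hcase : (cx = 1 ∧ cy = 0) ∨ (cx = 0 ∧ cy = 0) ∨ (cx = 0 ∧ cy = 1) := by omega
  have hfrom2 : ∀ m' : ℤ, 0 ≤ m' → m' ≤ l → Reach 1 l ((0, 0), (0, m')) ((1, 0), (0, 0)) := by
    intro m' hm0 hm1
    rcases le_or_gt m' (l - 1) with hs | hs
    · exact (reach2_C2 l m'.toNat m' hm0 hs (by omega)).trans (reach2_D l hl)
    · exact (reach2_N4 l hm0 (by omega) hm1).trans
        (reach2_C1 l m'.toNat m' hm0 hm1 (by omega))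
  rcases hcase with ⟨rfl, rfl⟩ | ⟨rfl, rfl⟩ | ⟨rfl, rfl⟩
  · exact reach2_C1 l m.toNat m h0 h1 (by omega)
  · exact hfrom2 m h0 h1
  · rcases le_or_gt m (l - 2) with hs | hs
    · exact (reach2_C3 l m.toNat m h0 hs (by omega)).trans
        (reach2_N9 l le_rfl (by omega))
    · exact (reach2_N5 l h0 (by omega) h1).trans (hfrom2 m h0 h1)

/-- Every element of `B₁ ⊗ B_l` reaches the base point `(1, (0,0))`. -/
lemma reach2_main (l : ℤ) (hl : 1 ≤ l) {c b : ℤ × ℤ} (hc : memB 1 c) (hb : memB l b) :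
    Reach 1 l (c, b) ((1, 0), (0, 0)) := by
  obtain ⟨x, y⟩ := b
  obtain ⟨h0, h1, h2⟩ := hb
  simp only at h0 h1 h2
  obtain ⟨cx, cy⟩ := c
  obtain ⟨a1, a2, a3⟩ := hc
  simp only at a1 a2 a3
  by_cases hA : cx = 1 ∧ cy = 0 ∧ y = 0
  · obtain ⟨rfl, rfl, rfl⟩ := hA
    refine (reach2_A l h0 (by omega)).trans ?_
    have hB := reach2_B l (show memB 1 ((0 : ℤ), (1 : ℤ)) from memB_mk le_rfl one_pos.le
      (by omega)) x.toNat x 0 h0 (by simp) le_rfl (by omega) (by omega)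
    rw [add_zero] at hB
    exact hB.trans (reach2_C l hl h0 (by omega)
      (memB_mk le_rfl one_pos.le (by omega)))
  · have hcx : cx ≤ y := by
      rcases (by omega : (cx = 1 ∧ cy = 0) ∨ (cx = 0 ∧ cy = 0) ∨ (cx = 0 ∧ cy = 1))
        with ⟨h1', h2'⟩ | ⟨_, rfl⟩ | ⟨h1', h2'⟩
      · omega
      · omega
      · omega
    have hB := reach2_B l (show memB 1 (cx, cy) from ⟨a1, a2, a3⟩) x.toNat x y h0 hcx h1 h2
      (by omega)
    exact hB.trans (reach2_C l hl (by omega) (by omega) ⟨a1, a2, a3⟩)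

end Order2
lemma reach_path {l1 l2 : ℤ} {u v : (ℤ × ℤ) × (ℤ × ℤ)} (hu : memB l1 u.1 ∧ memB l2 u.2)
    (h : Reach l1 l2 u v) :
    ∃ N : ℕ, ∃ w : ℕ → (ℤ × ℤ) × (ℤ × ℤ), w 0 = u ∧ w N = v ∧
      (∀ t ≤ N, memB l1 (w t).1 ∧ memB l2 (w t).2) ∧
      (∀ t < N, ∃ i, (i = 0 ∨ i = 1) ∧
        (teop l1 l2 i (w t) = some (w (t + 1)) ∨ tfop l1 l2 i (w t) = some (w (t + 1)))) := by
  induction h with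
  | refl =>
      exact ⟨0, fun _ => u, rfl, rfl, fun t _ => hu, fun t ht => absurd ht (by omega)⟩
  | @tail p q hup hpq ih =>
      obtain ⟨N, w, hw0, hwN, hmem, hstep⟩ := ih
      refine ⟨N + 1, fun t => if t = N + 1 then q else w t, ?_, ?_, ?_, ?_⟩
      · show (if 0 = N + 1 then q else w 0) = u
        rw [if_neg (by omega : ¬ 0 = N + 1), hw0]
      · show (if N + 1 = N + 1 then q else w (N + 1)) = q
        rw [if_pos rfl]
      · intro t ht
        by_cases hteq : t = N + 1
        · show memB l1 (if t = N + 1 then q else w t).1 ∧ memB l2 (if t = N + 1 then q else w t).2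
          rw [if_pos hteq]
          exact rel_mem_right hpq
        · show memB l1 (if t = N + 1 then q else w t).1 ∧ memB l2 (if t = N + 1 then q else w t).2
          rw [if_neg hteq]
          exact hmem t (by omega)
      · intro t ht
        show ∃ i, (i = 0 ∨ i = 1) ∧
          (teop l1 l2 i (if t = N + 1 then q else w t) =
              some (if t + 1 = N + 1 then q else w (t + 1)) ∨
            tfop l1 l2 i (if t = N + 1 then q else w t) =
              some (if t + 1 = N + 1 then q else w (t + 1)))
        by_cases hteq : t = N
        · rw [if_neg (by omega : ¬ t = N + 1), if_pos (by omega : t + 1 = N + 1), hteq, hwN]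
          obtain ⟨_, i, hi, hor⟩ := hpq
          exact ⟨i, hi, hor⟩
        · rw [if_neg (by omega : ¬ t = N + 1), if_neg (by omega : ¬ t + 1 = N + 1)]
          exact hstep t (by omega)
/-- Connectedness of the crystal graphs of `B_l ⊗ B₁` and `B₁ ⊗ B_l`. -/
theorem tensor_crystal_connected (l : ℤ) (hl : 1 ≤ l) :
    (∀ u v : (ℤ × ℤ) × (ℤ × ℤ),
      memB l u.1 ∧ memB 1 u.2 → memB l v.1 ∧ memB 1 v.2 →
      ∃ N : ℕ, ∃ w : ℕ → (ℤ × ℤ) × (ℤ × ℤ), w 0 = u ∧ w N = v ∧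
        (∀ t ≤ N, memB l (w t).1 ∧ memB 1 (w t).2) ∧
        (∀ t < N, ∃ i, (i = 0 ∨ i = 1) ∧
          (teop l 1 i (w t) = some (w (t + 1)) ∨ tfop l 1 i (w t) = some (w (t + 1))))) ∧
    (∀ u v : (ℤ × ℤ) × (ℤ × ℤ),
      memB 1 u.1 ∧ memB l u.2 → memB 1 v.1 ∧ memB l v.2 →
      ∃ N : ℕ, ∃ w : ℕ → (ℤ × ℤ) × (ℤ × ℤ), w 0 = u ∧ w N = v ∧
        (∀ t ≤ N, memB 1 (w t).1 ∧ memB l (w t).2) ∧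
        (∀ t < N, ∃ i, (i = 0 ∨ i = 1) ∧
          (teop 1 l i (w t) = some (w (t + 1)) ∨ tfop 1 l i (w t) = some (w (t + 1))))) := by
  constructor
  · intro u v hu hv
    have ru : Reach l 1 u ((0, 0), (1, 0)) := by
      obtain ⟨b, c⟩ := u
      exact reach1_main l hl hu.1 hu.2
    have rv : Reach l 1 v ((0, 0), (1, 0)) := by
      obtain ⟨b, c⟩ := v
      exact reach1_main l hl hv.1 hv.2
    exact reach_path hu (ru.trans (reach_symm rv))
  · intro u v hu hv
    have ru : Reach 1 l u ((1, 0), (0, 0)) := by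
      obtain ⟨c, b⟩ := u
      exact reach2_main l hl hu.1 hu.2
    have rv : Reach 1 l v ((1, 0), (0, 0)) := by
      obtain ⟨c, b⟩ := v
      exact reach2_main l hl hv.1 hv.2
    exact reach_path hu (ru.trans (reach_symm rv))
end

section
/- For every (x,y) ∈ B_♮ and every b ∈ B₁ there exists an integer l₀ such that for all l ≥ l₀: the element (x+l,y) lies in B_l, and R((x+l,y),b) = (b′,(x′+l,y′)), where (b′,(x′,y′)) = R′((x,y),b). In other words, the map R′ on B_♮ × B₁ is the stable large-l limit of the combinatorial R matrices R on B_l × B₁ under the shift (x,y) ↦ (x−l,y). -/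
/-- The element `1 = (1,0)` of `B₁`. -/
def one : ℤ × ℤ := (1, 0)
/-- The element `2 = (0,0)` of `B₁`. -/
def two : ℤ × ℤ := (0, 0)
/-- The element `3 = (0,1)` of `B₁`. -/
def three : ℤ × ℤ := (0, 1)

/-- The combinatorial `R` matrix `B_l ⊗ B₁ ≃ B₁ ⊗ B_l` of `U_q'(A₂⁽²⁾)`,
given by the explicit case list. -/
def Rmat (l : ℤ) (p : (ℤ × ℤ) × (ℤ × ℤ)) : (ℤ × ℤ) × (ℤ × ℤ) :=
  let x := p.1.1
  let y := p.1.2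
  if p.2 = one then
    if p.1 = (l, 0) then (one, (l, 0))
    else if x + y = l ∧ 1 ≤ y then (three, (x + 1, y - 1))
    else if x + y = l - 1 then (two, (x + 1, y))
    else (one, (x + 1, y + 1))
  else if p.2 = two then
    if p.1 = (l, 0) then (one, (l - 1, 0))
    else if x + y = l ∧ 1 ≤ y then (three, (x, y - 1))
    else (two, (x, y))
  else
    if p.1 = (0, l) then (three, (0, l))
    else if p.1 = (0, l - 1) then (two, (0, l))
    else if p.1 = (1, 0) then (one, (0, 1))
    else if y = 0 ∧ 2 ≤ x ∧ x ≤ l then (one, (x - 2, y))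
    else if x = 0 ∧ 0 ≤ y ∧ y ≤ l - 2 then (one, (x, y + 2))
    else (three, (x - 1, y - 1))

/-- Membership in `B_♮ = {(x,y) ∈ ℤ×ℤ : x ≤ 0, y ≥ 0, x+y ≤ 0}`. -/
def memBnat (b : ℤ × ℤ) : Prop := b.1 ≤ 0 ∧ 0 ≤ b.2 ∧ b.1 + b.2 ≤ 0

instance (b : ℤ × ℤ) : Decidable (memBnat b) := by unfold memBnat; infer_instance

/-- The map `R′ : B_♮ × B₁ → B₁ × B_♮`, the large-`l` limit of the
combinatorial `R` matrices. -/
def Rnat (p : (ℤ × ℤ) × (ℤ × ℤ)) : (ℤ × ℤ) × (ℤ × ℤ) :=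
  let x := p.1.1
  let y := p.1.2
  if p.2 = one then
    if p.1 = (0, 0) then (one, (0, 0))
    else if x + y = 0 ∧ 1 ≤ y then (three, (x + 1, y - 1))
    else if x + y = -1 then (two, (x + 1, y))
    else (one, (x + 1, y + 1))
  else if p.2 = two then
    if p.1 = (0, 0) then (one, (-1, 0))
    else if x + y = 0 ∧ 1 ≤ y then (three, (x, y - 1))
    else (two, (x, y))
  else
    if y = 0 then (one, (x - 2, y))
    else (three, (x - 1, y - 1))

/-- The map `R′` on `B_♮ × B₁` is the stable large-`l` limit of the combinatorial
`R` matrices `R : B_l × B₁ → B₁ × B_l` under the shift `(x,y) ↦ (x−l,y)`. -/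
theorem Rmat_stabilizes (x y : ℤ) (h : memBnat (x, y)) (b : ℤ × ℤ)
    (hb : b = one ∨ b = two ∨ b = three) :
    ∃ l₀ : ℤ, ∀ l ≥ l₀, memB l (x + l, y) ∧
      Rmat l ((x + l, y), b) =
        ((Rnat ((x, y), b)).1,
          ((Rnat ((x, y), b)).2.1 + l, (Rnat ((x, y), b)).2.2)) := by
  obtain ⟨hx, hy, hxy⟩ := h
  simp only at hx hy hxy
  refine ⟨-x + y + 3, fun l hl => ?_⟩
  refine ⟨⟨by simp; omega, by simp; omega, by simp; omega⟩, ?_⟩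
  rcases hb with rfl | rfl | rfl <;>
    simp only [Rmat, Rnat, one, two, three, Prod.mk.injEq] <;>
    split_ifs <;>
      simp only [Prod.mk.injEq, true_and, and_true, not_true, not_false_iff] at * <;>
      omega
end

section
/- For each integer l ≥ 1 the map g_l(a,b) = (a−l,b) maps B_l injectively into B_♮, and the Kashiwara operators stabilize through these embeddings: for each i ∈ {0,1} and each (x,y) ∈ B_♮ there exists l₀ such that the value of g_l(ẽ_i(g_l⁻¹(x,y))) ∈ B_♮ ∪ {0} (interpreted as 0 when ẽ_i(g_l⁻¹(x,y)) = 0) is the same for all l ≥ l₀, and similarly the value of g_l(f̃_i(g_l⁻¹(x,y))) is the same for all l ≥ l₀. -/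
/-- The embedding `g_l : B_l → B_♮`, `(a,b) ↦ (a−l,b)`. -/
def gmap (l : ℤ) (b : ℤ × ℤ) : ℤ × ℤ := (b.1 - l, b.2)

/-- Each `g_l` maps `B_l` injectively into `B_♮`, and the Kashiwara operators
stabilize through these embeddings: for `i ∈ {0,1}` and `(x,y) ∈ B_♮` the values
`g_l(ẽ_i(g_l⁻¹(x,y)))` and `g_l(f̃_i(g_l⁻¹(x,y)))` (where `g_l⁻¹(x,y) = (x+l,y)`,
and `0` is sent to `0`) are independent of `l` for `l` sufficiently large. -/
theorem gmap_embeds_and_operators_stabilize :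
    (∀ l : ℤ, 1 ≤ l →
      Set.InjOn (gmap l) {b | memB l b} ∧
      Set.MapsTo (gmap l) {b | memB l b} {b | memBnat b}) ∧
    (∀ i : ℕ, i = 0 ∨ i = 1 → ∀ x y : ℤ, memBnat (x, y) →
      (∃ l₀ : ℤ, ∃ v : Option (ℤ × ℤ),
        ∀ l ≥ l₀, (eop l i (x + l, y)).map (gmap l) = v) ∧
      (∃ l₀ : ℤ, ∃ v : Option (ℤ × ℤ),
        ∀ l ≥ l₀, (fop l i (x + l, y)).map (gmap l) = v)) := by
  constructor
  · intro l hl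
    refine ⟨fun a ha b hb hab => ?_, fun b hb => ?_⟩
    · have h1 := congrArg Prod.fst hab
      have h2 := congrArg Prod.snd hab
      simp only [gmap] at h1 h2
      exact Prod.ext (by omega) h2
    · simp only [Set.mem_setOf_eq, memB, memBnat, gmap] at *
      omega
  · intro i hi x y hxy
    obtain ⟨hx, hy, hxy'⟩ := hxy
    rcases hi with rfl | rfl
    · refine ⟨⟨y - x + 2, some (x - 1, y), fun l hl => ?_⟩,
        ⟨y - x + 2, if x + y ≤ -1 then some (x + 1, y) else none,
        fun l hl => ?_⟩⟩ <;>
      · simp only [eop, eraw, fop, fraw, memB, gmap, if_pos rfl]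
        split_ifs <;> simp_all [Option.map_some, gmap, Prod.ext_iff] <;> omega
    · refine ⟨⟨y - x + 2, if 1 ≤ y then some (x + 1, y - 1) else none,
        fun l hl => ?_⟩, ⟨y - x + 2, some (x - 1, y + 1), fun l hl => ?_⟩⟩ <;>
      · simp only [eop, eraw, fop, fraw, memB, gmap, if_neg (by norm_num : ¬(1:ℕ) = 0)]
        split_ifs <;> simp_all [Option.map_some, gmap, Prod.ext_iff] <;> omega
end

section
/- Define F : B_♮ → B_♮ by letting F(u) be the second component of R′(u,1). Then F((0,0)) = (0,0), and for every u ∈ B_♮ there exists an integer k₀ ≥ 0 such that Fᵏ(u) = (0,0) for all k ≥ k₀. (This is property (II): for any u ∈ B_♮, after feeding sufficiently many letters 1 through the carrier, the carrier returns to u_♮ = (0,0) and stays there.) -/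
/-- The carrier update on feeding the letter `1`: `F(u)` is the second component
of `R′(u, 1)`. -/
def carrierStep (u : ℤ × ℤ) : ℤ × ℤ := (Rnat (u, one)).2

lemma carrierStep_eq (u : ℤ × ℤ) :
    carrierStep u =
      if u = (0, 0) then (0, 0)
      else if u.1 + u.2 = 0 ∧ 1 ≤ u.2 then (u.1 + 1, u.2 - 1)
      else if u.1 + u.2 = -1 then (u.1 + 1, u.2)
      else (u.1 + 1, u.2 + 1) := by
  simp only [carrierStep, Rnat, one, two, three]
  norm_num
  split_ifs <;> rfl

lemma aux_iter : ∀ n : ℕ, ∀ u : ℤ × ℤ, memBnat u →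
    (-2 * u.1 - u.2).toNat ≤ n → carrierStep^[n] u = (0, 0) := by
  intro n
  induction n with
  | zero =>
    intro u hu h
    obtain ⟨h1, h2, h3⟩ := hu
    simp only [Function.iterate_zero, id]
    have : u.1 = 0 ∧ u.2 = 0 := by omega
    exact Prod.ext this.1 this.2
  | succ n ih =>
    intro u hu h
    obtain ⟨h1, h2, h3⟩ := hu
    rw [Function.iterate_succ_apply]
    by_cases h0 : u = (0, 0)
    · rw [carrierStep_eq, if_pos h0]
      exact ih (0, 0) ⟨le_refl _, le_refl _, by norm_num⟩ (by norm_num)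
    · have hne : ¬(u.1 = 0 ∧ u.2 = 0) := by
        intro ⟨a, b⟩; exact h0 (Prod.ext a b)
      rw [carrierStep_eq, if_neg h0]
      split_ifs with hc1 hc2
      · exact ih _ ⟨by omega, by omega, by omega⟩ (by omega)
      · exact ih _ ⟨by omega, by omega, by omega⟩ (by omega)
      · exact ih _ ⟨by omega, by omega, by omega⟩ (by omega)

/-- Property (II): `F((0,0)) = (0,0)`, and for every `u ∈ B_♮` the iterates `Fᵏ(u)`
equal `u_♮ = (0,0)` for all sufficiently large `k`. -/
theorem carrier_returns_to_vacuum :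
    carrierStep (0, 0) = (0, 0) ∧
    ∀ u : ℤ × ℤ, memBnat u → ∃ k₀ : ℕ, ∀ k ≥ k₀, carrierStep^[k] u = (0, 0) := by
  constructor
  · rw [carrierStep_eq]; norm_num
  · intro u hu
    refine ⟨(-2 * u.1 - u.2).toNat, fun k hk => aux_iter k u hu ?_⟩
    omega
end

section
/- The time evolution T is well defined on 𝒫: for every p ∈ 𝒫 the carrier sequence satisfies u_m = u_♮ for all sufficiently large m, the resulting output T(p) is independent of the choice of starting index i, and T(p) ∈ 𝒫, i.e. T(p)_j = 1 for all but finitely many j ∈ ℤ. -/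
/-- Auxiliary recursion for the carrier: `carrierAux p i n` is the carrier value `u_{i+n-1}`
after reading the letters `p_i, …, p_{i+n-1}`, starting from `u_♮ = (0,0)`. -/
def carrierAux (p : ℤ → ℤ × ℤ) (i : ℤ) : ℕ → ℤ × ℤ
  | 0 => (0, 0)
  | n + 1 => (Rnat (carrierAux p i n, p (i + n))).2

/-- The carrier sequence `u_m` for a state `p` and a starting index `i`
(with `p_j = 1` for `j < i`): `u_m = u_♮` for `m < i` and
`(T(p)_m, u_m) = R′(u_{m−1}, p_m)` for `m ≥ i`. -/
def carrier (p : ℤ → ℤ × ℤ) (i m : ℤ) : ℤ × ℤ := carrierAux p i (m - i + 1).toNat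

/-- The output `T(p)` of the time evolution computed with starting index `i`:
`T(p)_m = 1` for `m < i` and `(T(p)_m, u_m) = R′(u_{m−1}, p_m)` for `m ≥ i`. -/
def Tout (p : ℤ → ℤ × ℤ) (i m : ℤ) : ℤ × ℤ :=
  if m < i then one else (Rnat (carrier p i (m - 1), p m)).1

/-- The set `𝒫` of states: maps `ℤ → B₁` with `p_j = 1` for all but finitely many `j`. -/
def PP : Set (ℤ → ℤ × ℤ) :=
  {p | (∀ j, memB 1 (p j)) ∧ {j | p j ≠ one}.Finite}

lemma memB1_cases {b : ℤ × ℤ} (h : memB 1 b) : b = one ∨ b = two ∨ b = three := by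
  obtain ⟨h1, h2, h3⟩ := h
  rcases b with ⟨x, y⟩
  simp only [one, two, three, Prod.mk.injEq]
  omega

lemma Rnat_one_zero : Rnat ((0,0), one) = (one, (0,0)) := by
  simp [Rnat, one]

lemma step_mem {u b : ℤ × ℤ} (hu : memBnat u) (hb : memB 1 b) :
    memBnat (Rnat (u, b)).2 := by
  rcases memB1_cases hb with rfl | rfl | rfl <;>
  · rcases u with ⟨x, y⟩
    obtain ⟨h1, h2, h3⟩ := hu
    simp only [Rnat, one, two, three, memBnat, Prod.mk.injEq] at *
    split_ifs <;> simp only [Prod.mk.injEq, not_and, not_le] at * <;> omega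

lemma step_x {u : ℤ × ℤ} (hu : memBnat u) (hne : u ≠ (0, 0)) :
    (Rnat (u, one)).2.1 = u.1 + 1 := by
  rcases u with ⟨x, y⟩
  obtain ⟨h1, h2, h3⟩ := hu
  simp only [Ne, Rnat, one, two, three, Prod.mk.injEq, memBnat] at *
  split_ifs <;> simp only [Prod.mk.injEq, not_and, not_le] at * <;> omega

lemma out_cases (u b : ℤ × ℤ) :
    (Rnat (u, b)).1 = one ∨ (Rnat (u, b)).1 = two ∨ (Rnat (u, b)).1 = three := by
  simp only [Rnat]
  split_ifs <;> simp

lemma carrierAux_mem {p : ℤ → ℤ × ℤ} (hp : ∀ j, memB 1 (p j)) (i : ℤ) :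
    ∀ n, memBnat (carrierAux p i n)
  | 0 => by simp [carrierAux, memBnat]
  | n + 1 => step_mem (carrierAux_mem hp i n) (hp _)

lemma carrier_mem {p : ℤ → ℤ × ℤ} (hp : ∀ j, memB 1 (p j)) (i m : ℤ) :
    memBnat (carrier p i m) := carrierAux_mem hp i _

lemma carrier_of_lt {p : ℤ → ℤ × ℤ} {i m : ℤ} (h : m < i) : carrier p i m = (0, 0) := by
  unfold carrier
  have : (m - i + 1).toNat = 0 := by omega
  rw [this]; rfl

lemma carrier_rec {p : ℤ → ℤ × ℤ} {i m : ℤ} (h : i ≤ m) :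
    carrier p i m = (Rnat (carrier p i (m - 1), p m)).2 := by
  unfold carrier
  have h1 : (m - i + 1).toNat = (m - 1 - i + 1).toNat + 1 := by omega
  rw [h1]
  show (Rnat (carrierAux p i _, p (i + ((m - 1 - i + 1).toNat : ℤ)))).2 = _
  have h2 : (i + ((m - 1 - i + 1).toNat : ℤ)) = m := by omega
  rw [h2]

lemma carrierAux_ones {p : ℤ → ℤ × ℤ} {i : ℤ} :
    ∀ n : ℕ, (∀ n' < n, p (i + n') = one) → carrierAux p i n = (0, 0)
  | 0, _ => rfl
  | n + 1, h => by
    show (Rnat (carrierAux p i n, p (i + n))).2 = (0, 0)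
    rw [carrierAux_ones n (fun n' hn' => h n' (by omega)), h n (by omega), Rnat_one_zero]

lemma carrier_zero_of_lt {p : ℤ → ℤ × ℤ} {i i' m : ℤ} (hi : ∀ j < i, p j = one)
    (hm : m < i) : carrier p i' m = (0, 0) := by
  unfold carrier
  apply carrierAux_ones
  intro n' hn'
  apply hi
  omega

lemma ones_progress {p : ℤ → ℤ × ℤ} (hp : ∀ j, memB 1 (p j)) {i : ℤ} {n : ℕ}
    (h : ∀ n' : ℕ, n ≤ n' → p (i + n') = one) :
    ∀ k : ℕ, carrierAux p i (n + k) = (0, 0) ∨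
      (carrierAux p i n).1 + k ≤ (carrierAux p i (n + k)).1
  | 0 => by right; simp
  | k + 1 => by
    have step : carrierAux p i (n + (k + 1))
        = (Rnat (carrierAux p i (n + k), one)).2 := by
      show (Rnat (carrierAux p i (n + k), p (i + ((n + k : ℕ) : ℤ)))).2 = _
      rw [h (n + k) (by omega)]
    by_cases hz : carrierAux p i (n + k) = (0, 0)
    · left; rw [step, hz, Rnat_one_zero]
    · rcases ones_progress hp h k with h0 | h0
      · exact absurd h0 hz
      · right
        rw [step]
        rw [step_x (carrierAux_mem hp i _) hz]
        push_cast
        omega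

lemma ones_zero {p : ℤ → ℤ × ℤ} (hp : ∀ j, memB 1 (p j)) {i : ℤ} {n : ℕ}
    (h : ∀ n' : ℕ, n ≤ n' → p (i + n') = one) (k : ℕ)
    (hk : 0 ≤ (carrierAux p i n).1 + k) : carrierAux p i (n + k) = (0, 0) := by
  rcases ones_progress hp h k with h0 | h0
  · exact h0
  · have hm := carrierAux_mem hp i (n + k)
    obtain ⟨a1, a2, a3⟩ := hm
    have : (carrierAux p i (n + k)).1 = 0 := by omega
    have hy : (carrierAux p i (n + k)).2 = 0 := by omega
    exact Prod.ext this hy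

lemma Tout_mono {p : ℤ → ℤ × ℤ} {i i' : ℤ} (hle : i' ≤ i) (hi : ∀ j < i, p j = one) :
    Tout p i' = Tout p i := by
  have hag : ∀ m, i - 1 ≤ m → carrier p i' m = carrier p i m := by
    refine Int.le_induction ?_ ?_
    · rw [carrier_zero_of_lt (i' := i') hi (by omega), carrier_of_lt (by omega)]
    · intro m hm ih
      rw [carrier_rec (i := i') (by omega), carrier_rec (i := i) (by omega)]
      have h11 : m + 1 - 1 = m := by ring
      rw [h11, ih]
  funext m
  unfold Tout
  rcases lt_or_ge m i' with h1 | h1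
  · rw [if_pos h1, if_pos (by omega)]
  · rw [if_neg (by omega)]
    rcases lt_or_ge m i with h2 | h2
    · rw [if_pos h2, carrier_zero_of_lt hi (by omega), hi m h2, Rnat_one_zero]
    · rw [if_neg (by omega), hag (m - 1) (by omega)]

/-- Well-definedness of the time evolution `T` on `𝒫`: the carrier returns to `u_♮`
for all sufficiently large `m`, the output is independent of the choice of the
starting index `i`, and the output again lies in `𝒫`. -/
theorem T_well_defined (p : ℤ → ℤ × ℤ) (hp : p ∈ PP) (i : ℤ)
    (hi : ∀ j < i, p j = one) :
    (∃ M : ℤ, ∀ m ≥ M, carrier p i m = (0, 0)) ∧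
    (∀ i' : ℤ, (∀ j < i', p j = one) → Tout p i = Tout p i') ∧
    Tout p i ∈ PP := by
  obtain ⟨hb, hfin⟩ := hp
  obtain ⟨N0, hN0⟩ := hfin.bddAbove
  set N := max i (N0 + 1) with hN
  have hNi : i ≤ N := le_max_left _ _
  have hone : ∀ j, N ≤ j → p j = one := by
    intro j hj
    by_contra hc
    have := hN0 (show j ∈ {j | p j ≠ one} from hc)
    omega
  set n : ℕ := (N - i).toNat with hn
  have hones : ∀ n' : ℕ, n ≤ n' → p (i + n') = one := by
    intro n' h
    apply hone
    omega
  have hmem := carrierAux_mem hb i n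
  set k : ℕ := (-(carrierAux p i n).1).toNat with hk
  have hM : ∀ m ≥ N + k, carrier p i m = (0, 0) := by
    intro m hm
    unfold carrier
    have hsplit : (m - i + 1).toNat = n + ((m - i + 1).toNat - n) := by omega
    rw [hsplit]
    apply ones_zero hb hones
    have h1 : (carrierAux p i n).1 ≤ 0 := hmem.1
    omega
  refine ⟨⟨N + k, hM⟩, ?_, ?_, ?_⟩
  · intro i' hi'
    exact (Tout_mono (min_le_left i i') hi).symm.trans
      (Tout_mono (min_le_right i i') hi')
  · intro j
    unfold Tout
    split
    · exact ⟨by norm_num [one], by norm_num [one], by norm_num [one]⟩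
    · rcases out_cases (carrier p i (j - 1)) (p j) with h | h | h <;> rw [h] <;>
        exact ⟨by norm_num [one, two, three], by norm_num [one, two, three],
          by norm_num [one, two, three]⟩
  · apply Set.Finite.subset (Set.finite_Icc i (N + k + 1))
    intro j hj
    simp only [Set.mem_setOf_eq] at hj
    simp only [Set.mem_Icc]
    constructor
    · by_contra h
      exact hj (by unfold Tout; rw [if_pos (by omega)])
    · by_contra h
      push_neg at h
      apply hj
      unfold Tout
      rw [if_neg (by omega), hM (j - 1) (by omega), hone j (by omega), Rnat_one_zero]
end

section
/- One-soliton propagation, even case (the A₂⁽²⁾ case of Theorem 3.1 with velocity l = 2Q): let Q ≥ 1 and let p ∈ 𝒫 be the configuration with p_j = 3 for 1 ≤ j ≤ Q and p_j = 1 for all other j ∈ ℤ. Then T(p)_j = p_{j−2Q} for all j ∈ ℤ; that is, the pattern 3 3 ⋯ 3 (Q letters) propagates under T as a rigid translation to the right by 2Q sites. -/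
/-- Closed form of the carrier for the one-soliton configuration. -/
def fcar (Q m : ℤ) : ℤ × ℤ :=
  if m ≤ 0 then (0,0) else if m ≤ Q then (-2*m,0)
  else if m ≤ 2*Q then (m-3*Q, m-Q)
  else if m ≤ 3*Q then (m-3*Q, 3*Q-m) else (0,0)

set_option maxHeartbeats 2000000 in
set_option maxRecDepth 8000 in
lemma fcar_step (Q : ℤ) (hQ : 1 ≤ Q) (m : ℤ) :
    Rnat (fcar Q m, if 1 ≤ m+1 ∧ m+1 ≤ Q then three else one)
      = ((if 2*Q+1 ≤ m+1 ∧ m+1 ≤ 3*Q then three else one), fcar Q (m+1)) := by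
  unfold fcar Rnat one two three
  split_ifs <;>
      simp only [Prod.mk.injEq, Prod.fst, Prod.snd, not_and, not_le, not_lt,
        true_and, and_true, true_implies, not_true, false_implies, and_self] at * <;>
    first
      | omega
      | (split_ifs <;>
          simp only [Prod.mk.injEq, not_and, not_le, not_lt, true_and, and_true,
            true_implies, not_true, false_implies, and_self] at * <;> omega)

/-- One-soliton propagation, even case: the configuration `p` with `p_j = 3` for
`1 ≤ j ≤ Q` and `p_j = 1` otherwise satisfies `T(p)_j = p_{j−2Q}` for all `j`,
i.e. the pattern `3 3 ⋯ 3` (`Q` letters) moves rigidly to the right by `2Q` sites. -/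

theorem one_soliton_even (Q : ℤ) (hQ : 1 ≤ Q) (p : ℤ → ℤ × ℤ)
    (hp : ∀ j : ℤ, p j = if 1 ≤ j ∧ j ≤ Q then three else one)
    (i : ℤ) (hi : ∀ j < i, p j = one) :
    ∀ j : ℤ, Tout p i j = p (j - 2 * Q) := by
  have hi1 : i ≤ 1 := by
    by_contra h
    push_neg at h
    have h1 := hi 1 h
    rw [hp] at h1
    simp only [if_pos (⟨le_refl _, hQ⟩ : (1:ℤ) ≤ 1 ∧ (1:ℤ) ≤ Q)] at h1
    exact absurd h1 (by decide)
  have hstep : ∀ m : ℤ, i ≤ m →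
      carrier p i m = (Rnat (carrier p i (m-1), p m)).2 := by
    intro m hm
    have h1 : (m - i + 1).toNat = (m - i).toNat + 1 := by omega
    have h2 : i + ((m - i).toNat : ℤ) = m := by omega
    have h3 : (m - 1 - i + 1).toNat = (m - i).toNat := by omega
    unfold carrier
    rw [h1, h3, carrierAux, h2]
  have hcar : ∀ m : ℤ, carrier p i m = fcar Q m := by
    have key : ∀ m : ℤ, i - 1 ≤ m → carrier p i m = fcar Q m := by
      intro m hm
      revert m hm
      refine Int.le_induction ?_ ?_
      ·
        have h4 : (i - 1 - i + 1).toNat = 0 := by omega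
        unfold carrier
        rw [h4]
        unfold fcar carrierAux
        rw [if_pos (by omega : i - 1 ≤ 0)]
      · intro m hm ih
        rw [hstep (m+1) (by omega), show m + 1 - 1 = m by ring, ih, hp,
          fcar_step Q hQ m]
    intro m
    rcases le_or_gt (i-1) m with h | h
    · exact key m h
    · have h4 : (m - i + 1).toNat = 0 := by omega
      unfold carrier
      rw [h4]
      unfold fcar carrierAux
      rw [if_pos (by omega : m ≤ 0)]
  intro j
  rw [hp (j - 2*Q)]
  unfold Tout
  rcases lt_or_ge j i with h | h
  · rw [if_pos h, if_neg (by omega)]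
  · rw [if_neg (by omega), hcar, hp]
    have := fcar_step Q hQ (j-1)
    rw [show j - 1 + 1 = j by ring] at this
    rw [this]
    by_cases hc : 2*Q+1 ≤ j ∧ j ≤ 3*Q
    · rw [if_pos hc, if_pos (by omega)]
    · rw [if_neg hc, if_neg (by omega)]
end

section
/- One-soliton propagation, odd case (the A₂⁽²⁾ case of Theorem 3.1 with velocity l = 2Q−1): let Q ≥ 1 and let p ∈ 𝒫 be the configuration with p₁ = 2, p_j = 3 for 2 ≤ j ≤ Q, and p_j = 1 for all other j ∈ ℤ. Then T(p)_j = p_{j−(2Q−1)} for all j ∈ ℤ; that is, the pattern 2 3 ⋯ 3 (Q letters, one 2 followed by Q−1 threes) propagates under T as a rigid translation to the right by 2Q−1 sites. -/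
/-- Closed form of the carrier for the odd one-soliton. -/
def uval (Q m : ℤ) : ℤ × ℤ :=
  if m ≤ 0 then (0, 0)
  else if m ≤ Q then (1 - 2 * m, 0)
  else if m ≤ 2 * Q - 1 then (m - 3 * Q + 1, m - Q)
  else if m ≤ 3 * Q - 1 then (m - 3 * Q + 1, 3 * Q - 1 - m)
  else (0, 0)

/-- The one-soliton configuration. -/
def pval (Q m : ℤ) : ℤ × ℤ :=
  if m = 1 then two else if 2 ≤ m ∧ m ≤ Q then three else one

lemma uval_eq0 {Q m : ℤ} (h : m ≤ 0) : uval Q m = (0, 0) := by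
  unfold uval; rw [if_pos h]

lemma uval_eq1 {Q m : ℤ} (h1 : 1 ≤ m) (h2 : m ≤ Q) : uval Q m = (1 - 2 * m, 0) := by
  unfold uval; rw [if_neg (by omega), if_pos h2]

lemma uval_eq2 {Q m : ℤ} (hQ : 1 ≤ Q) (h1 : Q ≤ m) (h2 : m ≤ 2 * Q - 1) :
    uval Q m = (m - 3 * Q + 1, m - Q) := by
  rcases eq_or_lt_of_le h1 with h | h
  · rw [← h, uval_eq1 (by omega) le_rfl, Prod.mk.injEq]; omega
  · unfold uval; rw [if_neg (by omega), if_neg (by omega), if_pos h2]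

lemma uval_eq3 {Q m : ℤ} (hQ : 1 ≤ Q) (h1 : 2 * Q ≤ m) (h2 : m ≤ 3 * Q - 1) :
    uval Q m = (m - 3 * Q + 1, 3 * Q - 1 - m) := by
  unfold uval; rw [if_neg (by omega), if_neg (by omega), if_neg (by omega), if_pos h2]

lemma uval_eq4 {Q m : ℤ} (hQ : 1 ≤ Q) (h : 3 * Q - 1 ≤ m) : uval Q m = (0, 0) := by
  rcases eq_or_lt_of_le h with h' | h'
  · rw [← h', uval_eq3 hQ (by omega) le_rfl, Prod.mk.injEq]; omega
  · unfold uval; rw [if_neg (by omega), if_neg (by omega), if_neg (by omega), if_neg (by omega)]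

lemma pval_eq_one {Q m : ℤ} (h : m ≤ 0 ∨ Q + 1 ≤ m) (hQ : 1 ≤ Q) : pval Q m = one := by
  unfold pval; rw [if_neg (by omega), if_neg (by omega)]

lemma pval_eq_two {Q m : ℤ} (h : m = 1) : pval Q m = two := by
  unfold pval; rw [if_pos h]

lemma pval_eq_three {Q m : ℤ} (h1 : 2 ≤ m) (h2 : m ≤ Q) : pval Q m = three := by
  unfold pval; rw [if_neg (by omega), if_pos ⟨h1, h2⟩]

lemma step (Q : ℤ) (hQ : 1 ≤ Q) (m : ℤ) :
    Rnat (uval Q (m - 1), pval Q m) = (pval Q (m - (2 * Q - 1)), uval Q m) := by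
  rcases le_or_gt m 0 with h | _
  · -- m ≤ 0
    rw [uval_eq0 (by omega), pval_eq_one (Or.inl h) hQ, uval_eq0 h,
      pval_eq_one (Or.inl (by omega)) hQ]
    simp [Rnat, one, two, three]
  rcases le_or_gt m 1 with h1 | _
  · -- m = 1
    have hm : m = 1 := by omega
    subst hm
    rw [uval_eq0 (by omega), pval_eq_two (by omega), uval_eq1 (by omega) hQ,
      pval_eq_one (Or.inl (by omega)) hQ]
    simp [Rnat, one, two, three, Prod.ext_iff] <;> omega
  rcases le_or_gt m Q with h2 | _
  · -- 2 ≤ m ≤ Q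
    rw [uval_eq1 (by omega) (by omega), pval_eq_three (by omega) h2,
      uval_eq1 (by omega) h2, pval_eq_one (Or.inl (by omega)) hQ]
    simp [Rnat, one, two, three, Prod.ext_iff]
    omega
  rcases le_or_gt m (2 * Q - 1) with h3 | _
  · -- Q + 1 ≤ m ≤ 2Q - 1
    rw [uval_eq2 hQ (by omega) (by omega), pval_eq_one (Or.inr (by omega)) hQ,
      uval_eq2 hQ (by omega) h3, pval_eq_one (Or.inl (by omega)) hQ]
    simp [Rnat, one, two, three, Prod.ext_iff]
    split_ifs <;> simp_all <;> omega
  rcases le_or_gt m (2 * Q) with h4 | _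
  · -- m = 2Q
    rw [uval_eq2 hQ (by omega) (by omega), pval_eq_one (Or.inr (by omega)) hQ,
      uval_eq3 hQ (by omega) (by omega), pval_eq_two (by omega)]
    simp [Rnat, one, two, three, Prod.ext_iff]
    split_ifs <;> simp_all <;> omega
  rcases le_or_gt m (3 * Q - 1) with h5 | _
  · -- 2Q + 1 ≤ m ≤ 3Q - 1
    rw [uval_eq3 hQ (by omega) (by omega), pval_eq_one (Or.inr (by omega)) hQ,
      uval_eq3 hQ (by omega) h5, pval_eq_three (by omega) (by omega)]
    simp [Rnat, one, two, three, Prod.ext_iff]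
    split_ifs <;> simp_all <;> omega
  · -- m ≥ 3Q
    rw [uval_eq4 hQ (by omega), pval_eq_one (Or.inr (by omega)) hQ,
      uval_eq4 hQ (by omega), pval_eq_one (Or.inr (by omega)) hQ]
    simp [Rnat, one, two, three]

/-- One-soliton propagation, odd case: the configuration `p` with `p₁ = 2`,
`p_j = 3` for `2 ≤ j ≤ Q`, and `p_j = 1` otherwise satisfies
`T(p)_j = p_{j−(2Q−1)}` for all `j`, i.e. the pattern `2 3 ⋯ 3` (`Q` letters)
moves rigidly to the right by `2Q − 1` sites. -/
theorem one_soliton_odd (Q : ℤ) (hQ : 1 ≤ Q) (p : ℤ → ℤ × ℤ)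
    (hp : ∀ j : ℤ, p j =
      if j = 1 then two else if 2 ≤ j ∧ j ≤ Q then three else one)
    (i : ℤ) (hi : ∀ j < i, p j = one) :
    ∀ j : ℤ, Tout p i j = p (j - (2 * Q - 1)) := by
  have hp' : ∀ j, p j = pval Q j := hp
  have hi1 : i ≤ 1 := by
    by_contra h
    have h1 := hi 1 (by omega)
    rw [hp' 1, pval_eq_two rfl] at h1
    simp [two, one, Prod.ext_iff] at h1
  have hcarr : ∀ n : ℕ, carrierAux p i n = uval Q (i + n - 1) := by
    intro n
    induction n with
    | zero =>
      rw [show (i + ((0:ℕ):ℤ) - 1) = i - 1 by push_cast; ring, uval_eq0 (by omega)]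
      rfl
    | succ n ih =>
      have h0 : carrierAux p i (n + 1) = (Rnat (carrierAux p i n, p (i + n))).2 := rfl
      rw [h0, ih, hp' (i + n), step Q hQ (i + n)]
      show uval Q (i + n) = uval Q (i + ((n:ℤ) + 1) - 1)
      congr 1
      ring
  have hcar : ∀ m : ℤ, carrier p i m = uval Q m := by
    intro m
    unfold carrier
    rcases le_or_gt (i - 1) m with h | h
    · rw [hcarr]
      congr 1
      omega
    · have h0 : (m - i + 1).toNat = 0 := by omega
      rw [h0, hcarr, show (i + ((0:ℕ):ℤ) - 1) = i - 1 by push_cast; ring,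
        uval_eq0 (by omega), uval_eq0 (by omega)]
  intro j
  unfold Tout
  rw [hp' (j - (2 * Q - 1))]
  split_ifs with hj
  · rw [pval_eq_one (Or.inl (by omega)) hQ]
  · rw [hcar, hp' j, step Q hQ j]
end
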